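/- arXiv:1009.5626 — 3 statements merged into one kernel-verified Lean document; each statement's English description precedes it below -/
import Mathlib

section
/- Let a, b, c, d, e, f be nonnegative reals such that the weighted 6-cycle G₁ with these lengths is realizable, and set μ₁ = 2·max{a,e,f} and μ₂ = 2·max{b,c,d}. Then for α ≥ 0 there exist points p₁, …, p₆ ∈ ℝ² with dist(p₁,p₆)=a, dist(p₁,p₂)=b, dist(p₂,p₃)=c, dist(p₃,p₄)=d, dist(p₄,p₅)=e, dist(p₅,p₆)=f and dist(p₁,p₄)=α if and only if α lies in [max{0, μ₁ − (a+e+f)}, a+e+f] ∩ [max{0, μ₂ − (b+c+d)}, b+c+d]. -/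
/-!
Cutting `G₂` along the diagonal `v₁v₄` leaves two three-link chains `v₁v₂v₃v₄` and `v₁v₆v₅v₄`
between the same endpoints, which can be placed independently once `p₁, p₄` are fixed. A chain
with links `x, y, z` can join two points at distance `t` exactly when each of `x, y, z, t` is at
most the sum of the other three, i.e. `t ∈ [max 0 (2 max{x, y, z} - (x + y + z)), x + y + z]`.
Necessity is the triangle inequality. For sufficiency, put the middle joint on a suitable circle
about the first endpoint and then the remaining joint on the intersection of two circles; two
circles whose radii satisfy the triangle inequalities meet because the distance to one centre
varies continuously over the other (connected) circle, from `|r - t|` to `r + t`.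
-/

open Metric Set

def threeLinkReach (x y z : ℝ) : Set ℝ :=
  Icc (max 0 (2 * max x (max y z) - (x + y + z))) (x + y + z)

theorem mem_threeLinkReach_iff {x y z t : ℝ} :
    t ∈ threeLinkReach x y z ↔
      0 ≤ t ∧ x ≤ y + z + t ∧ y ≤ x + z + t ∧ z ≤ x + y + t ∧ t ≤ x + y + z := by
  simp only [threeLinkReach, mem_Icc, max_le_iff, sub_le_iff_le_add,
    mul_max_of_nonneg _ _ (zero_le_two : (0 : ℝ) ≤ 2)]
  constructor
  · rintro ⟨⟨h0, hx, hy, hz⟩, ht⟩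
    exact ⟨h0, by linarith, by linarith, by linarith, ht⟩
  · rintro ⟨h0, hx, hy, hz, ht⟩
    exact ⟨⟨h0, by linarith, by linarith, by linarith⟩, ht⟩

theorem threeLinkReach_swap (x y z : ℝ) : threeLinkReach x z y = threeLinkReach x y z := by
  rw [threeLinkReach, threeLinkReach, max_comm z y, add_right_comm]

theorem dist_mem_threeLinkReach {X : Type*} [PseudoMetricSpace X] {A q₁ q₂ B : X} {x y z : ℝ}
    (hx : dist A q₁ = x) (hy : dist q₁ q₂ = y) (hz : dist q₂ B = z) :
    dist A B ∈ threeLinkReach x y z := by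
  subst hx hy hz
  refine mem_threeLinkReach_iff.mpr ⟨dist_nonneg, ?_, ?_, ?_, dist_triangle4 A q₁ q₂ B⟩
  · linarith [dist_triangle4 A B q₂ q₁, dist_comm q₁ q₂, dist_comm q₂ B, dist_comm A B]
  · linarith [dist_triangle4 q₁ A B q₂, dist_comm q₂ B, dist_comm q₁ A]
  · linarith [dist_triangle4 q₂ q₁ A B, dist_comm q₂ q₁, dist_comm q₁ A]

section NormedSpace

variable {E : Type*} [NormedAddCommGroup E] [NormedSpace ℝ E]

theorem exists_norm_eq_one_smul_eq [Nontrivial E] (v : E) : ∃ u : E, ‖u‖ = 1 ∧ ‖v‖ • u = v := by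
  rcases eq_or_ne v 0 with rfl | hv
  · obtain ⟨u, hu⟩ := exists_norm_eq E zero_le_one
    exact ⟨u, hu, by simp⟩
  · exact ⟨‖v‖⁻¹ • v, norm_smul_inv_norm hv, smul_inv_smul₀ (norm_ne_zero_iff.mpr hv) v⟩

theorem exists_dist_eq_dist_eq (hE : 1 < Module.rank ℝ E) (A B : E) {r s : ℝ} (hr : 0 ≤ r)
    (hs₁ : |r - dist A B| ≤ s) (hs₂ : s ≤ r + dist A B) : ∃ q, dist A q = r ∧ dist q B = s := by
  have : Nontrivial E := rank_pos_iff_nontrivial.mp (zero_lt_one.trans hE)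
  obtain ⟨u, hu, huAB⟩ := exists_norm_eq_one_smul_eq (B - A)
  set t := dist A B with ht
  have hB : B = A + t • u := by rw [ht, dist_eq_norm', huAB, add_sub_cancel]
  have near : dist (A + r • u) B = |r - t| := by
    rw [hB, dist_add_left, dist_eq_norm, ← sub_smul, norm_smul, hu, mul_one, Real.norm_eq_abs]
  have far : dist (A - r • u) B = r + t := by
    rw [hB, sub_eq_add_neg, dist_add_left, dist_eq_norm, ← neg_smul, ← sub_smul, norm_smul, hu,
      mul_one, Real.norm_eq_abs, abs_of_nonpos (by linarith [dist_nonneg (x := A) (y := B)])]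
    ring
  have hsphere : ∀ v : E, ‖v‖ = 1 → A + r • v ∈ sphere A r := fun v hv => by
    rw [mem_sphere, dist_self_add_left, norm_smul, hv, mul_one, Real.norm_of_nonneg hr]
  obtain ⟨q, hq, hqB⟩ := (isPreconnected_sphere hE A r).intermediate_value (hsphere u hu)
    (by simpa [sub_eq_add_neg, ← neg_smul] using hsphere (-u) (by rw [norm_neg, hu]))
    (continuous_id.dist continuous_const).continuousOn
    (show s ∈ Icc (dist (A + r • u) B) (dist (A - r • u) B) from ⟨near ▸ hs₁, far ▸ hs₂⟩)
  exact ⟨q, by rw [dist_comm]; exact hq, hqB⟩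


theorem exists_threeLink_of_dist_mem_threeLinkReach (hE : 1 < Module.rank ℝ E) (A B : E)
    {x y z : ℝ} (hx : 0 ≤ x) (hy : 0 ≤ y) (hz : 0 ≤ z) (h : dist A B ∈ threeLinkReach x y z) :
    ∃ q₁ q₂, dist A q₁ = x ∧ dist q₁ q₂ = y ∧ dist q₂ B = z := by
  obtain ⟨ht, hx', hy', hz', hxyz⟩ := mem_threeLinkReach_iff.mp h
  set t := dist A B
  -- any `m ∈ [max |x - y| |t - z|, min (x + y) (t + z)]` can serve as `dist A q₂`
  set m := max |x - y| |t - z|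
  obtain ⟨hxm, hym⟩ := abs_sub_le_iff.mp (le_max_left |x - y| |t - z|)
  obtain ⟨htm, hzm⟩ := abs_sub_le_iff.mp (le_max_right |x - y| |t - z|)
  have hmxy : m ≤ x + y :=
    max_le (abs_sub_le_iff.mpr ⟨by linarith, by linarith⟩)
      (abs_sub_le_iff.mpr ⟨by linarith, by linarith⟩)
  have hmtz : m ≤ t + z :=
    max_le (abs_sub_le_iff.mpr ⟨by linarith, by linarith⟩)
      (abs_sub_le_iff.mpr ⟨by linarith, by linarith⟩)
  obtain ⟨q₂, hAq₂, hq₂B⟩ := exists_dist_eq_dist_eq hE A B (r := m) (s := z) (by linarith)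
    (abs_sub_le_iff.mpr ⟨by linarith, by linarith⟩) (by linarith)
  obtain ⟨q₁, hAq₁, hq₁q₂⟩ := exists_dist_eq_dist_eq hE A q₂ hx (s := y)
    (by rw [hAq₂]; exact abs_sub_le_iff.mpr ⟨by linarith, by linarith⟩) (by linarith)
  exact ⟨q₁, q₂, hAq₁, hq₁q₂, hq₂B⟩

end NormedSpace

theorem hexagon_with_diagonal_realizable_iff_general (a b c d e f α : ℝ)
    (ha : 0 ≤ a) (hb : 0 ≤ b) (hc : 0 ≤ c) (hd : 0 ≤ d) (he : 0 ≤ e)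
    (hf : 0 ≤ f) :
    (∃ p : Fin 6 → EuclideanSpace ℝ (Fin 2),
      dist (p 0) (p 5) = a ∧ dist (p 0) (p 1) = b ∧ dist (p 1) (p 2) = c ∧
      dist (p 2) (p 3) = d ∧ dist (p 3) (p 4) = e ∧ dist (p 4) (p 5) = f ∧
      dist (p 0) (p 3) = α) ↔
    (α ∈ Set.Icc (max 0 (2 * max a (max e f) - (a + e + f))) (a + e + f) ∩
      Set.Icc (max 0 (2 * max b (max c d) - (b + c + d))) (b + c + d)) := by
  change _ ↔ α ∈ threeLinkReach a e f ∩ threeLinkReach b c d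
  rw [← threeLinkReach_swap a e f]
  have hE : 1 < Module.rank ℝ (EuclideanSpace ℝ (Fin 2)) := by
    rw [← Module.finrank_eq_rank, finrank_euclideanSpace_fin]; norm_num
  constructor
  · rintro ⟨p, h05, h01, h12, h23, h34, h45, rfl⟩
    exact ⟨dist_mem_threeLinkReach h05 ((dist_comm _ _).trans h45)
      ((dist_comm _ _).trans h34),
      dist_mem_threeLinkReach h01 h12 h23⟩
  · rintro ⟨hafe, hbcd⟩
    obtain ⟨B, hB⟩ := exists_norm_eq (EuclideanSpace ℝ (Fin 2)) (mem_threeLinkReach_iff.mp hbcd).1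
    rw [← hB, ← dist_zero_left] at hafe hbcd
    obtain ⟨q₁, q₂, h01, h12, h23⟩ :=
      exists_threeLink_of_dist_mem_threeLinkReach hE 0 B hb hc hd hbcd
    obtain ⟨q₅, q₄, h05, h54, h43⟩ :=
      exists_threeLink_of_dist_mem_threeLinkReach hE 0 B ha hf he hafe
    exact ⟨![0, q₁, q₂, B, q₄, q₅], h05, h01, h12, h23, dist_comm B q₄ ▸ h43,
      dist_comm q₄ q₅ ▸ h54, (dist_zero_left B).trans hB⟩

/-- **Realizable extension from `(G₁, l_{G₁})` to `(G₂, l_{G₂})`.**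
Assume the weighted 6-cycle with edge lengths `a, b, c, d, e, f` is realizable.
With `μ₁ = 2·max{a,e,f}` and `μ₂ = 2·max{b,c,d}`, the graph `G₂` obtained by
adding the diagonal `v₁v₄` of length `α ≥ 0` is realizable in the plane if and
only if `α ∈ [max{0, μ₁−(a+e+f)}, a+e+f] ∩ [max{0, μ₂−(b+c+d)}, b+c+d]`. -/
theorem hexagon_with_diagonal_realizable_iff (a b c d e f α : ℝ)
    (ha : 0 ≤ a) (hb : 0 ≤ b) (hc : 0 ≤ c) (hd : 0 ≤ d) (he : 0 ≤ e)
    (hf : 0 ≤ f) (hα : 0 ≤ α)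
    (hG1 : ∃ p : Fin 6 → EuclideanSpace ℝ (Fin 2),
      dist (p 0) (p 5) = a ∧ dist (p 0) (p 1) = b ∧ dist (p 1) (p 2) = c ∧
      dist (p 2) (p 3) = d ∧ dist (p 3) (p 4) = e ∧ dist (p 4) (p 5) = f) :
    (∃ p : Fin 6 → EuclideanSpace ℝ (Fin 2),
      dist (p 0) (p 5) = a ∧ dist (p 0) (p 1) = b ∧ dist (p 1) (p 2) = c ∧
      dist (p 2) (p 3) = d ∧ dist (p 3) (p 4) = e ∧ dist (p 4) (p 5) = f ∧
      dist (p 0) (p 3) = α) ↔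
    (α ∈ Set.Icc (max 0 (2 * max a (max e f) - (a + e + f))) (a + e + f) ∩
      Set.Icc (max 0 (2 * max b (max c d) - (b + c + d))) (b + c + d)) :=
  hexagon_with_diagonal_realizable_iff_general a b c d e f α ha hb hc hd he hf
end

section
/- Let a, b, c, d, e, f, α be nonnegative reals such that the weighted graph G₂ with these lengths is realizable. Then the set S = {β ≥ 0 : there exist p₁,…,p₆ ∈ ℝ² with dist(p₁,p₆)=a, dist(p₁,p₂)=b, dist(p₂,p₃)=c, dist(p₃,p₄)=d, dist(p₄,p₅)=e, dist(p₅,p₆)=f, dist(p₁,p₄)=α and dist(p₃,p₆)=β} is either a closed interval or the disjoint union of two closed intervals; that is, there exist reals m ≤ M ≤ n ≤ N such that S = [m,N], or M < n and S = [m,M] ∪ [n,N]. -/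
/-!
Put `v₁` at `0` and `v₄` at `α` on the real axis. Then `v₃` ranges over the points of the circle
`|z - α| = d` whose distance to `0` lies in `[|b - c|, b + c]` (exactly the positions for which
`v₂` can be inserted), `v₆` over the points of the circle `|z| = a` whose distance to `α` lies in
`[|e - f|, e + f]`, and `β` is the distance between them. Both sets are invariant under complex
conjugation, and their parts in the closed upper half plane are arcs, i.e. continuous images of
compact intervals. So the set of `β` is the union of the distance sets of (arc, arc) and of
(arc, reflected arc), two continuous real images of compact connected sets: two closed intervals.
-/

open Set Complex ComplexConjugate

theorem exists_Icc_union_Icc_eq {α : Type*} [LinearOrder α] {m₁ N₁ m₂ N₂ : α}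
    (h₁ : m₁ ≤ N₁) (h₂ : m₂ ≤ N₂) :
    ∃ m M n N : α, m ≤ M ∧ M ≤ n ∧ n ≤ N ∧
      (Icc m₁ N₁ ∪ Icc m₂ N₂ = Icc m N ∨ (M < n ∧ Icc m₁ N₁ ∪ Icc m₂ N₂ = Icc m M ∪ Icc n N)) := by
  wlog hm : m₁ ≤ m₂ generalizing m₁ N₁ m₂ N₂
  · simpa only [union_comm] using this h₂ h₁ (le_of_not_ge hm)
  rcases le_or_gt m₂ N₁ with hov | hgap
  · refine ⟨min m₁ m₂, min m₁ m₂, min m₁ m₂, max N₁ N₂, le_rfl, le_rfl,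
      (min_le_left _ _).trans (h₁.trans (le_max_left _ _)),
      Or.inl (Icc_union_Icc' hov (hm.trans h₂))⟩
  · exact ⟨m₁, N₁, m₂, N₂, h₁, hgap.le, h₂, Or.inr ⟨hgap, rfl⟩⟩

theorem dist_mem_Icc_of_dist_eq {α : Type*} [PseudoMetricSpace α] {x y z : α} {b c : ℝ}
    (hb : dist x y = b) (hc : dist y z = c) : dist x z ∈ Icc |b - c| (b + c) := by
  refine ⟨?_, hb ▸ hc ▸ dist_triangle x y z⟩
  have := abs_dist_sub_le x z y
  rwa [dist_comm z y, hb, hc] at this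

theorem exists_dist_eq_dist_eq_of_dist_mem_Icc {E : Type*} [NormedAddCommGroup E]
    [NormedSpace ℝ E] (hE : 1 < Module.rank ℝ E) {x z : E} {b c : ℝ}
    (h : dist x z ∈ Icc |b - c| (b + c)) : ∃ y, dist x y = b ∧ dist y z = c := by
  have : Nontrivial E := rank_pos_iff_nontrivial.mp (zero_lt_one.trans hE)
  obtain ⟨hlo, hhi⟩ := h
  have hb : 0 ≤ b := by linarith [le_abs_self (b - c), neg_abs_le (b - c)]
  set r := dist x z
  -- the points `x ± b • v` of the circle are the nearest to and farthest from `z`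
  obtain ⟨v, hv, hzx⟩ : ∃ v : E, ‖v‖ = 1 ∧ z - x = r • v := by
    rcases eq_or_ne z x with rfl | hne
    · obtain ⟨v, hv⟩ := exists_norm_eq E zero_le_one
      exact ⟨v, hv, by simp [r]⟩
    · have hr : r = ‖z - x‖ := dist_eq_norm' x z
      refine ⟨‖z - x‖⁻¹ • (z - x), norm_smul_inv_norm (sub_ne_zero.mpr hne), ?_⟩
      rw [hr, smul_inv_smul₀ (norm_ne_zero_iff.mpr (sub_ne_zero.mpr hne))]
  have hnear : dist (x + b • v) z = |b - r| := by
    rw [dist_eq_norm, show x + b • v - z = (b - r) • v by rw [sub_smul, ← hzx]; abel,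
      norm_smul, hv, mul_one, Real.norm_eq_abs]
  have hfar : dist (x - b • v) z = b + r := by
    rw [dist_eq_norm', show z - (x - b • v) = (b + r) • v by rw [add_smul, ← hzx]; abel,
      norm_smul, hv, mul_one, Real.norm_eq_abs, abs_of_nonneg (by positivity)]
  have hc : c ∈ Icc |b - r| (b + r) := by
    rw [abs_le] at hlo
    exact ⟨abs_le.mpr ⟨by linarith, by linarith⟩, by linarith⟩
  obtain ⟨y, hy, hyc⟩ := (isPreconnected_sphere hE x b).intermediate_value
    (show x + b • v ∈ Metric.sphere x b by simp [norm_smul, hv, abs_of_nonneg hb])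
    (show x - b • v ∈ Metric.sphere x b by simp [norm_smul, hv, abs_of_nonneg hb])
    (continuous_id.dist continuous_const).continuousOn (hnear ▸ hfar ▸ hc)
  exact ⟨y, by rw [dist_comm]; exact hy, hyc⟩

namespace Complex

theorem sq_dist_ofReal (z : ℂ) (s : ℝ) : dist z s ^ 2 = (z.re - s) ^ 2 + z.im ^ 2 := by
  rw [dist_eq_re_im, Real.sq_sqrt (by positivity)]
  simp

theorem dist_ofReal_eq_sqrt {z : ℂ} {s ρ : ℝ} (h : dist z s = ρ) (u : ℝ) :
    dist z u = √(ρ ^ 2 + (s - u) * (2 * z.re - s - u)) := by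
  rw [← Real.sqrt_sq dist_nonneg, sq_dist_ofReal, ← h, sq_dist_ofReal]
  congr 1
  ring

theorem dist_conj_ofReal (z : ℂ) (s : ℝ) : dist (conj z) s = dist z s := by
  simpa using dist_conj_conj z s

theorem exists_isometry_eq_zero_eq_dist (x y : ℂ) :
    ∃ φ : ℂ → ℂ, Isometry φ ∧ φ x = 0 ∧ φ y = dist x y := by
  set u := exp (↑(-arg (y - x)) * I)
  have hu : ‖u‖ = 1 := norm_exp_ofReal_mul_I _
  refine ⟨fun z => u * (z - x), Isometry.of_dist_eq fun z w => ?_, by simp, ?_⟩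
  · rw [dist_eq, ← mul_sub, norm_mul, hu, one_mul, sub_sub_sub_cancel_right, dist_eq]
  · show u * (y - x) = _
    conv_lhs => rw [← norm_mul_exp_arg_mul_I (y - x)]
    rw [dist_comm, dist_eq, mul_left_comm, ← exp_add]
    simp

end Complex

def circleBand (s ρ u r₁ r₂ : ℝ) : Set ℂ := {z | dist z s = ρ ∧ dist z u ∈ Icc r₁ r₂}

section circleBand

variable {s ρ u r₁ r₂ : ℝ}

theorem conj_mem_circleBand {z : ℂ} (hz : z ∈ circleBand s ρ u r₁ r₂) :
    conj z ∈ circleBand s ρ u r₁ r₂ := by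
  simpa only [circleBand, mem_ofPred_eq, dist_conj_ofReal] using hz

-- Over the upper half plane the circle is the graph of `x ↦ √(ρ² - (x - s)²)`, along which the
-- distance to `u` is the square root of an affine function of `x`.
theorem circleBand_inter_upper_eq_image :
    circleBand s ρ u r₁ r₂ ∩ {z | 0 ≤ z.im} =
      (fun x : ℝ => (x + √(ρ ^ 2 - (x - s) ^ 2) * I : ℂ)) ''
        (Icc (s - ρ) (s + ρ) ∩ (fun x => √(ρ ^ 2 + (s - u) * (2 * x - s - u))) ⁻¹' Icc r₁ r₂) := by
  ext z
  constructor
  · rintro ⟨⟨hzs, hzu⟩, him⟩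
    have hre : |z.re - s| ≤ ρ := by
      simpa [← hzs, dist_eq] using abs_re_le_norm (z - s)
    obtain ⟨hre₁, hre₂⟩ := abs_le.mp hre
    refine ⟨z.re, ⟨⟨by linarith, by linarith⟩, ?_⟩, ?_⟩
    · rwa [mem_preimage, ← dist_ofReal_eq_sqrt hzs]
    · have : ρ ^ 2 - (z.re - s) ^ 2 = z.im ^ 2 := by rw [← hzs, sq_dist_ofReal]; ring
      apply Complex.ext <;> simp [this, Real.sqrt_sq him]
  · rintro ⟨x, ⟨⟨hx₁, hx₂⟩, hxu⟩, rfl⟩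
    set w : ℂ := x + √(ρ ^ 2 - (x - s) ^ 2) * I
    have hw : w.re = x ∧ w.im = √(ρ ^ 2 - (x - s) ^ 2) := by simp [w]
    have hws : dist w s = ρ := by
      rw [← Real.sqrt_sq (show 0 ≤ ρ by linarith), ← Real.sqrt_sq dist_nonneg, sq_dist_ofReal,
        hw.1, hw.2, Real.sq_sqrt (by nlinarith)]
      congr 1
      ring
    refine ⟨⟨hws, ?_⟩, show 0 ≤ w.im from hw.2 ▸ Real.sqrt_nonneg _⟩
    rwa [dist_ofReal_eq_sqrt hws, hw.1]

theorem isCompact_circleBand_inter_upper :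
    IsCompact (circleBand s ρ u r₁ r₂ ∩ {z | 0 ≤ z.im}) := by
  rw [circleBand_inter_upper_eq_image]
  exact (isCompact_Icc.inter_right (isClosed_Icc.preimage (by fun_prop))).image (by fun_prop)

theorem isPreconnected_circleBand_inter_upper :
    IsPreconnected (circleBand s ρ u r₁ r₂ ∩ {z | 0 ≤ z.im}) := by
  rw [circleBand_inter_upper_eq_image]
  refine (OrdConnected.isPreconnected ?_).image _ (by fun_prop : Continuous _).continuousOn
  have : OrdConnected ((fun x => √(ρ ^ 2 + (s - u) * (2 * x - s - u))) ⁻¹' Icc r₁ r₂) := by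
    rcases le_total 0 (s - u) with h | h
    · exact ordConnected_Icc.preimage_mono fun x y hxy => Real.sqrt_le_sqrt (by nlinarith)
    · exact ordConnected_Icc.preimage_anti fun x y hxy => Real.sqrt_le_sqrt (by nlinarith)
  exact ordConnected_Icc.inter this

end circleBand

theorem image2_dist_eq_union_of_conj_mem {X Y : Set ℂ} (hX : ∀ z ∈ X, conj z ∈ X)
    (hY : ∀ z ∈ Y, conj z ∈ Y) :
    image2 dist X Y = image2 dist (X ∩ {z | 0 ≤ z.im}) (Y ∩ {z | 0 ≤ z.im}) ∪
      image2 (fun z w => dist z (conj w)) (X ∩ {z | 0 ≤ z.im}) (Y ∩ {z | 0 ≤ z.im}) := by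
  refine Subset.antisymm ?_ (union_subset (image2_subset inter_subset_left inter_subset_left) ?_)
  · rintro _ ⟨x, hx, y, hy, rfl⟩
    wlog hxim : 0 ≤ x.im generalizing x y
    · simpa only [dist_conj_conj] using
        this (conj x) (hX x hx) (conj y) (hY y hy) (by simpa using (not_le.mp hxim).le)
    rcases le_total 0 y.im with hyim | hyim
    · exact Or.inl ⟨x, ⟨hx, hxim⟩, y, ⟨hy, hyim⟩, rfl⟩
    · exact Or.inr ⟨x, ⟨hx, hxim⟩, conj y, ⟨hY y hy, by simpa using hyim⟩, by simp⟩
  · rintro _ ⟨x, hx, y, hy, rfl⟩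
    exact ⟨x, hx.1, conj y, hY y hy.1, rfl⟩

theorem nonempty_inter_upper_of_conj_mem {X : Set ℂ} (hX : ∀ z ∈ X, conj z ∈ X)
    (hne : X.Nonempty) : (X ∩ {z | 0 ≤ z.im}).Nonempty := by
  obtain ⟨z, hz⟩ := hne
  rcases le_total 0 z.im with him | him
  · exact ⟨z, hz, him⟩
  · exact ⟨conj z, hX z hz, by simpa using him⟩

theorem exists_image2_eq_Icc {α β : Type*} [TopologicalSpace α] [TopologicalSpace β]
    {f : α → β → ℝ} (hf : Continuous (Function.uncurry f)) {A : Set α} {B : Set β}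
    (hAc : IsCompact A) (hA : IsConnected A) (hBc : IsCompact B) (hB : IsConnected B) :
    ∃ m N, m ≤ N ∧ image2 f A B = Icc m N := by
  rw [← image_prod]
  have hconn := (hA.prod hB).image _ hf.continuousOn
  have hIcc := eq_Icc_of_connected_compact hconn ((hAc.prod hBc).image hf)
  exact ⟨_, _, nonempty_Icc.mp (hIcc ▸ hconn.nonempty), hIcc⟩

-- The reflection `z ↦ conj z` fixes both bands, so one may put the first point in the upper
-- half plane and the second in either half.
theorem exists_image2_dist_circleBand_eq_union_Icc {s ρ u r₁ r₂ s' ρ' u' r₁' r₂' : ℝ}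
    (hX : (circleBand s ρ u r₁ r₂).Nonempty) (hY : (circleBand s' ρ' u' r₁' r₂').Nonempty) :
    ∃ m₁ N₁ m₂ N₂, m₁ ≤ N₁ ∧ m₂ ≤ N₂ ∧
      image2 dist (circleBand s ρ u r₁ r₂) (circleBand s' ρ' u' r₁' r₂') =
        Icc m₁ N₁ ∪ Icc m₂ N₂ := by
  have hXc : ∀ z ∈ circleBand s ρ u r₁ r₂, conj z ∈ _ := fun _ => conj_mem_circleBand
  have hYc : ∀ z ∈ circleBand s' ρ' u' r₁' r₂', conj z ∈ _ := fun _ => conj_mem_circleBand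
  have hX' := nonempty_inter_upper_of_conj_mem hXc hX
  have hY' := nonempty_inter_upper_of_conj_mem hYc hY
  obtain ⟨m₁, N₁, h₁, hI₁⟩ := exists_image2_eq_Icc continuous_dist
    isCompact_circleBand_inter_upper ⟨hX', isPreconnected_circleBand_inter_upper⟩
    isCompact_circleBand_inter_upper ⟨hY', isPreconnected_circleBand_inter_upper⟩
  obtain ⟨m₂, N₂, h₂, hI₂⟩ := exists_image2_eq_Icc
    (f := fun z w => dist z (conj w)) (by fun_prop)
    isCompact_circleBand_inter_upper ⟨hX', isPreconnected_circleBand_inter_upper⟩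
    isCompact_circleBand_inter_upper ⟨hY', isPreconnected_circleBand_inter_upper⟩
  exact ⟨m₁, N₁, m₂, N₂, h₁, h₂, by rw [image2_dist_eq_union_of_conj_mem hXc hYc, hI₁, hI₂]⟩

-- Once `v₁ = 0` and `v₄ = α`, the vertex `v₃` ranges over the first band and `v₆` over the
-- second; `v₂` and `v₅` can then be placed exactly when the triangle inequalities hold.
theorem G3_beta_set_eq_image2_dist (a b c d e f α : ℝ) (hα : 0 ≤ α) :
    {β : ℝ | 0 ≤ β ∧ ∃ p : Fin 6 → EuclideanSpace ℝ (Fin 2),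
      dist (p 0) (p 5) = a ∧ dist (p 0) (p 1) = b ∧ dist (p 1) (p 2) = c ∧
      dist (p 2) (p 3) = d ∧ dist (p 3) (p 4) = e ∧ dist (p 4) (p 5) = f ∧
      dist (p 0) (p 3) = α ∧ dist (p 2) (p 5) = β} =
      image2 dist (circleBand α d 0 |b - c| (b + c)) (circleBand 0 a α |e - f| (e + f)) := by
  let E := Complex.orthonormalBasisOneI.repr
  ext β
  constructor
  · rintro ⟨-, p, h05, h01, h12, h23, h34, h45, h03, rfl⟩
    obtain ⟨φ, hφ, hφ0, hφ3⟩ := exists_isometry_eq_zero_eq_dist (E.symm (p 0)) (E.symm (p 3))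
    have hq : ∀ i j, dist (φ (E.symm (p i))) (φ (E.symm (p j))) = dist (p i) (p j) :=
      fun i j => by rw [hφ.dist_eq, E.symm.dist_map]
    have hq₀ : φ (E.symm (p 0)) = (0 : ℝ) := by rw [hφ0, ofReal_zero]
    rw [E.symm.dist_map, h03] at hφ3
    refine ⟨φ (E.symm (p 2)), ⟨?_, ?_⟩, φ (E.symm (p 5)), ⟨?_, ?_⟩, hq 2 5⟩
    · rw [← hφ3, hq, h23]
    · rw [← hq₀, hq, dist_comm]
      exact dist_mem_Icc_of_dist_eq h01 h12
    · rw [← hq₀, hq, dist_comm, h05]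
    · rw [← hφ3, hq, dist_comm]
      exact dist_mem_Icc_of_dist_eq h34 h45
  · rintro ⟨q₂, ⟨hq₂₃, hq₂₀⟩, q₅, ⟨hq₅₀, hq₅₃⟩, rfl⟩
    have hrank : 1 < Module.rank ℝ ℂ := by simp [rank_real_complex]
    obtain ⟨z₁, hz₁, hz₁q⟩ := exists_dist_eq_dist_eq_of_dist_mem_Icc hrank
      (x := 0) (z := q₂) (by rwa [dist_comm, ← ofReal_zero])
    obtain ⟨z₄, hz₄, hz₄q⟩ := exists_dist_eq_dist_eq_of_dist_mem_Icc hrank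
      (x := α) (z := q₅) (by rwa [dist_comm])
    refine ⟨dist_nonneg, fun i => E (![0, z₁, q₂, α, z₄, q₅] i), ?_⟩
    simp only [E.dist_map]
    refine ⟨?_, hz₁, hz₁q, hq₂₃, hz₄, hz₄q, ?_, rfl⟩
    · simpa [dist_comm] using hq₅₀
    · simp [hα]

theorem G3_beta_set_interval_or_two_intervals_general (a b c d e f α : ℝ)
    (hα : 0 ≤ α)
    (hG2 : ∃ p : Fin 6 → EuclideanSpace ℝ (Fin 2),
      dist (p 0) (p 5) = a ∧ dist (p 0) (p 1) = b ∧ dist (p 1) (p 2) = c ∧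
      dist (p 2) (p 3) = d ∧ dist (p 3) (p 4) = e ∧ dist (p 4) (p 5) = f ∧
      dist (p 0) (p 3) = α) :
    ∃ m M n N : ℝ, m ≤ M ∧ M ≤ n ∧ n ≤ N ∧
      ({β : ℝ | 0 ≤ β ∧ ∃ p : Fin 6 → EuclideanSpace ℝ (Fin 2),
          dist (p 0) (p 5) = a ∧ dist (p 0) (p 1) = b ∧ dist (p 1) (p 2) = c ∧
          dist (p 2) (p 3) = d ∧ dist (p 3) (p 4) = e ∧ dist (p 4) (p 5) = f ∧
          dist (p 0) (p 3) = α ∧ dist (p 2) (p 5) = β}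
        = Set.Icc m N ∨
        (M < n ∧
          {β : ℝ | 0 ≤ β ∧ ∃ p : Fin 6 → EuclideanSpace ℝ (Fin 2),
            dist (p 0) (p 5) = a ∧ dist (p 0) (p 1) = b ∧ dist (p 1) (p 2) = c ∧
            dist (p 2) (p 3) = d ∧ dist (p 3) (p 4) = e ∧ dist (p 4) (p 5) = f ∧
            dist (p 0) (p 3) = α ∧ dist (p 2) (p 5) = β}
          = Set.Icc m M ∪ Set.Icc n N)) := by
  obtain ⟨p, h05, h01, h12, h23, h34, h45, h03⟩ := hG2
  have hS := G3_beta_set_eq_image2_dist a b c d e f α hα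
  have hne : (image2 dist (circleBand α d 0 |b - c| (b + c))
      (circleBand 0 a α |e - f| (e + f))).Nonempty :=
    hS ▸ ⟨_, dist_nonneg, p, h05, h01, h12, h23, h34, h45, h03, rfl⟩
  obtain ⟨m₁, N₁, m₂, N₂, h₁, h₂, hI⟩ :=
    exists_image2_dist_circleBand_eq_union_Icc hne.of_image2_left hne.of_image2_right
  rw [hS, hI]
  exact exists_Icc_union_Icc_eq h₁ h₂

/-- **Realizable extension from `(G₂, l_{G₂})` to `(G₃, l_{G₃})`.**
Assume the weighted graph `G₂` (6-cycle with lengths `a,…,f` plus the diagonal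
`v₁v₄` of length `α`) is realizable. Then the set of lengths `β ≥ 0` for the
extra diagonal `v₃v₆` keeping the configuration realizable is a closed interval
or the disjoint union of two closed intervals. -/
theorem G3_beta_set_interval_or_two_intervals (a b c d e f α : ℝ)
    (ha : 0 ≤ a) (hb : 0 ≤ b) (hc : 0 ≤ c) (hd : 0 ≤ d) (he : 0 ≤ e)
    (hf : 0 ≤ f) (hα : 0 ≤ α)
    (hG2 : ∃ p : Fin 6 → EuclideanSpace ℝ (Fin 2),
      dist (p 0) (p 5) = a ∧ dist (p 0) (p 1) = b ∧ dist (p 1) (p 2) = c ∧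
      dist (p 2) (p 3) = d ∧ dist (p 3) (p 4) = e ∧ dist (p 4) (p 5) = f ∧
      dist (p 0) (p 3) = α) :
    ∃ m M n N : ℝ, m ≤ M ∧ M ≤ n ∧ n ≤ N ∧
      ({β : ℝ | 0 ≤ β ∧ ∃ p : Fin 6 → EuclideanSpace ℝ (Fin 2),
          dist (p 0) (p 5) = a ∧ dist (p 0) (p 1) = b ∧ dist (p 1) (p 2) = c ∧
          dist (p 2) (p 3) = d ∧ dist (p 3) (p 4) = e ∧ dist (p 4) (p 5) = f ∧
          dist (p 0) (p 3) = α ∧ dist (p 2) (p 5) = β}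
        = Set.Icc m N ∨
        (M < n ∧
          {β : ℝ | 0 ≤ β ∧ ∃ p : Fin 6 → EuclideanSpace ℝ (Fin 2),
            dist (p 0) (p 5) = a ∧ dist (p 0) (p 1) = b ∧ dist (p 1) (p 2) = c ∧
            dist (p 2) (p 3) = d ∧ dist (p 3) (p 4) = e ∧ dist (p 4) (p 5) = f ∧
            dist (p 0) (p 3) = α ∧ dist (p 2) (p 5) = β}
          = Set.Icc m M ∪ Set.Icc n N)) :=
  G3_beta_set_interval_or_two_intervals_general a b c d e f α hα hG2
end

section
/- There exists ε₀ > 0 such that for every ε with 0 < ε < ε₀, the set {γ ≥ 0 : there exist p₁,…,p₆ ∈ ℝ² with dist(p₁,p₆)=ε, dist(p₁,p₂)=1, dist(p₂,p₃)=1, dist(p₃,p₄)=1, dist(p₄,p₅)=1, dist(p₅,p₆)=√2, dist(p₁,p₄)=1, dist(p₃,p₆)=√2 and dist(p₂,p₅)=γ} has exactly two connected components (one containing 1 and one containing √5). -/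
/-!
Normalise by an isometry so that `p 1 = (-t, 0)` and `p 3 = (t, 0)`. The unit rhombus
`p 0, p 1, p 2, p 3` then puts `p 0 = (0, s)` and `p 2 = (0, -s)` with `s² + t² = 1`, and
`p 5 = p 0 + ε (sin θ, cos θ)` for an angle `θ`; the condition `|p 2 p 5| = √2` fixes `s` and `t`
as functions of `θ`. The vertex `p 4` lies on the circle of radius `1` about `p 3` and the circle
of radius `√2` about `p 5`, and so does `p 2`; hence `p 4` is `p 2` (giving `γ = 1`) or the mirror
image of `p 2` in the line `p 3 p 5`, giving a value `γ(θ)` that depends continuously on `θ`.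
For small `ε` all these values are at least `√2`, while `γ(0) ≥ √5 ≥ γ(π)` (at `ε = 0` the
rhombus is a square and `γ = √5`). So the set is `{1}` together with an interval around `√5`.
-/

open Real

/-- The set of lengths `γ ≥ 0` for the edge `v₂v₅` such that `K_{3,3}` with
edge lengths `a, b, c, d, e, f, α, β, γ` on the edges
`v₁v₆, v₁v₂, v₂v₃, v₃v₄, v₄v₅, v₅v₆, v₁v₄, v₃v₆, v₂v₅` (vertex `vᵢ` is index
`i-1`) is realizable in the Euclidean plane. -/
def K33GammaSet (a b c d e f α β : ℝ) : Set ℝ :=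
  {γ : ℝ | 0 ≤ γ ∧ ∃ p : Fin 6 → EuclideanSpace ℝ (Fin 2),
    dist (p 0) (p 5) = a ∧ dist (p 0) (p 1) = b ∧ dist (p 1) (p 2) = c ∧
    dist (p 2) (p 3) = d ∧ dist (p 3) (p 4) = e ∧ dist (p 4) (p 5) = f ∧
    dist (p 0) (p 3) = α ∧ dist (p 2) (p 5) = β ∧ dist (p 1) (p 4) = γ}

section LineReflection

variable {V : Type*} [NormedAddCommGroup V] [InnerProductSpace ℝ V]

-- For `a = b` the division yields `0` and this is the point reflection in `a`.
noncomputable def lineReflection (a b p : V) : V :=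
  (2 : ℝ) • (a + (inner ℝ (p - a) (b - a) / ‖b - a‖ ^ 2) • (b - a)) - p

lemma dist_lineReflection_left (a b p : V) : dist (lineReflection a b p) a = dist p a := by
  rw [dist_eq_norm, dist_eq_norm, ← sq_eq_sq₀ (norm_nonneg _) (norm_nonneg _)]
  set c := inner ℝ (p - a) (b - a) / ‖b - a‖ ^ 2
  have hc : c * ‖b - a‖ ^ 2 = inner ℝ (p - a) (b - a) := by
    rcases eq_or_ne (b - a) 0 with h | h
    · simp [c, h]
    · exact div_mul_cancel₀ _ (by positivity)
  have : lineReflection a b p - a = (2 * c) • (b - a) - (p - a) := by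
    simp only [lineReflection, c]; module
  rw [this, norm_sub_sq_real, norm_smul, mul_pow, real_inner_smul_left, real_inner_comm,
    Real.norm_eq_abs, sq_abs]
  linear_combination (4 * c) * hc

lemma lineReflection_comm (a b p : V) : lineReflection a b p = lineReflection b a p := by
  rcases eq_or_ne b a with rfl | h
  · rfl
  have hD : ‖b - a‖ ^ 2 ≠ 0 := by simpa [sub_eq_zero] using h
  have hsum :
      inner ℝ (p - a) (b - a) / ‖b - a‖ ^ 2 + inner ℝ (p - b) (a - b) / ‖a - b‖ ^ 2 = 1 := by
    rw [norm_sub_rev a b, ← add_div, div_eq_one_iff_eq hD, ← neg_sub b a, inner_neg_right,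
      ← sub_eq_add_neg, ← inner_sub_left, sub_sub_sub_cancel_left, real_inner_self_eq_norm_sq]
  unfold lineReflection
  rw [eq_sub_of_add_eq' hsum]
  module

lemma dist_lineReflection_right (a b p : V) : dist (lineReflection a b p) b = dist p b := by
  rw [lineReflection_comm, dist_lineReflection_left]

lemma Continuous.lineReflection {X : Type*} [TopologicalSpace X] {a b p : X → V}
    (ha : Continuous a) (hb : Continuous b) (hp : Continuous p) (hab : ∀ x, a x ≠ b x) :
    Continuous fun x => lineReflection (a x) (b x) (p x) := by
  have : ∀ x, ‖b x - a x‖ ^ 2 ≠ 0 := fun x => by simpa [sub_eq_zero] using (hab x).symm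
  unfold _root_.lineReflection
  fun_prop (disch := exact this)

end LineReflection

local notation "E²" => EuclideanSpace ℝ (Fin 2)

lemma EuclideanSpace.dist_sq_fin_two (p q : E²) :
    dist p q ^ 2 = (p 0 - q 0) ^ 2 + (p 1 - q 1) ^ 2 := by
  rw [EuclideanSpace.dist_eq, Real.sq_sqrt (by positivity), Fin.sum_univ_two, Real.dist_eq,
    Real.dist_eq, sq_abs, sq_abs]

lemma EuclideanSpace.eq_toLp_fin_two_iff (p : E²) (x y : ℝ) :
    p = !₂[x, y] ↔ p 0 = x ∧ p 1 = y := by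
  refine ⟨fun h => by simp [h], fun ⟨h0, h1⟩ => PiLp.ext (Fin.forall_fin_two.2 ⟨?_, ?_⟩)⟩ <;> simpa

lemma lineReflection_apply (a b p : E²) (i : Fin 2) :
    lineReflection a b p i = 2 * a i + 2 * (((p 0 - a 0) * (b 0 - a 0) +
      (p 1 - a 1) * (b 1 - a 1)) / ((b 0 - a 0) ^ 2 + (b 1 - a 1) ^ 2)) * (b i - a i) - p i := by
  have hinner :
      inner ℝ (p - a) (b - a) = (p 0 - a 0) * (b 0 - a 0) + (p 1 - a 1) * (b 1 - a 1) := by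
    simp [PiLp.inner_apply, Fin.sum_univ_two, mul_comm]
  have hnorm : ‖b - a‖ ^ 2 = (b 0 - a 0) ^ 2 + (b 1 - a 1) ^ 2 := by
    rw [← dist_eq_norm, EuclideanSpace.dist_sq_fin_two]
  simp only [lineReflection, hinner, hnorm, PiLp.sub_apply, PiLp.smul_apply, PiLp.add_apply,
    smul_eq_mul]
  ring

theorem eq_or_eq_lineReflection_of_dist_eq {a b p q : E²} (hab : a ≠ b)
    (ha : dist q a = dist p a) (hb : dist q b = dist p b) : q = p ∨ q = lineReflection a b p := by
  have hD : (b 0 - a 0) ^ 2 + (b 1 - a 1) ^ 2 ≠ 0 := by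
    rw [← EuclideanSpace.dist_sq_fin_two]; exact pow_ne_zero 2 (dist_ne_zero.2 hab.symm)
  have ha' := congrArg (· ^ 2) ha
  have hb' := congrArg (· ^ 2) hb
  simp only [EuclideanSpace.dist_sq_fin_two] at ha' hb'
  have horth : (b 0 - a 0) * (q 0 - p 0) + (b 1 - a 1) * (q 1 - p 1) = 0 := by
    linear_combination (ha' - hb') / 2
  -- With `d = b - a`, `x = q - p` and `m = ⟪d⊥, x⟫`: since `x ⊥ d`, `‖d‖² x = m d⊥`, which
  -- turns `ha'` into `m (m + 2 ⟪d⊥, p - a⟫) = 0`. The root `m = 0` is `q = p`, the other one is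
  -- the mirror image.
  have hm : (-(b 1 - a 1) * (q 0 - p 0) + (b 0 - a 0) * (q 1 - p 1)) *
      (-(b 1 - a 1) * (q 0 - p 0) + (b 0 - a 0) * (q 1 - p 1) +
        2 * (-(p 0 - a 0) * (b 1 - a 1) + (p 1 - a 1) * (b 0 - a 0))) = 0 := by
    linear_combination ((b 0 - a 0) ^ 2 + (b 1 - a 1) ^ 2) * ha' -
      ((b 0 - a 0) * (q 0 - p 0) + (b 1 - a 1) * (q 1 - p 1) +
        2 * ((p 0 - a 0) * (b 0 - a 0) + (p 1 - a 1) * (b 1 - a 1))) * horth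
  rcases mul_eq_zero.1 hm with hm | hm
  · left
    refine PiLp.ext (Fin.forall_fin_two.2 ⟨?_, ?_⟩)
    · apply mul_left_cancel₀ hD
      linear_combination (b 0 - a 0) * horth - (b 1 - a 1) * hm
    · apply mul_left_cancel₀ hD
      linear_combination (b 1 - a 1) * horth + (b 0 - a 0) * hm
  · right
    refine PiLp.ext (Fin.forall_fin_two.2 ⟨?_, ?_⟩)
    · rw [lineReflection_apply]
      field_simp
      linear_combination (b 0 - a 0) * horth - (b 1 - a 1) * hm
    · rw [lineReflection_apply]
      field_simp
      linear_combination (b 1 - a 1) * horth + (b 0 - a 0) * hm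

lemma exists_dist_preserving_normalize (a b c : E²) (hab : a ≠ b) :
    ∃ F : E² → E², (∀ x y, dist (F x) (F y) = dist x y) ∧
      F a = !₂[-(dist a b / 2), 0] ∧ F b = !₂[dist a b / 2, 0] ∧ 0 ≤ F c 1 := by
  set L := dist a b
  have hL : 0 < L := dist_pos.2 hab
  have hL2 : L ^ 2 = (a 0 - b 0) ^ 2 + (a 1 - b 1) ^ 2 := EuclideanSpace.dist_sq_fin_two a b
  let along (x : E²) : ℝ :=
    (x 0 - (a 0 + b 0) / 2) * (b 0 - a 0) + (x 1 - (a 1 + b 1) / 2) * (b 1 - a 1)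
  let across (x : E²) : ℝ :=
    -(x 0 - (a 0 + b 0) / 2) * (b 1 - a 1) + (x 1 - (a 1 + b 1) / 2) * (b 0 - a 0)
  obtain ⟨σ, hσ2, hσc⟩ : ∃ σ : ℝ, σ ^ 2 = 1 ∧ 0 ≤ σ * across c := by
    rcases le_total 0 (across c) with h | h
    · exact ⟨1, by norm_num, by linarith⟩
    · exact ⟨-1, by norm_num, by linarith⟩
  refine ⟨fun x => !₂[along x / L, σ * across x / L], fun x y => ?_, ?_, ?_, ?_⟩
  · rw [← sq_eq_sq₀ dist_nonneg dist_nonneg, EuclideanSpace.dist_sq_fin_two,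
      EuclideanSpace.dist_sq_fin_two]
    simp only [Matrix.cons_val_zero, Matrix.cons_val_one, along, across]
    rw [div_sub_div_same, div_sub_div_same, div_pow, div_pow, ← add_div,
      div_eq_iff (by positivity)]
    linear_combination (-(x 0 - y 0) * (b 1 - a 1) + (x 1 - y 1) * (b 0 - a 0)) ^ 2 * hσ2 -
      ((x 0 - y 0) ^ 2 + (x 1 - y 1) ^ 2) * hL2
  · have h1 : along a / L = -(L / 2) := by
      rw [div_eq_iff hL.ne']; linear_combination hL2 / 2
    have h2 : σ * across a / L = 0 := by simp only [across]; ring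
    simp only [h1, h2]
  · have h1 : along b / L = L / 2 := by
      rw [div_eq_iff hL.ne']; linear_combination -hL2 / 2
    have h2 : σ * across b / L = 0 := by simp only [across]; ring
    simp only [h1, h2]
  · simp only [Matrix.cons_val_one, Matrix.cons_val_fin_one]
    positivity

lemma exists_eq_toLp_zero_of_dist_eq_one {t : ℝ} (ht : 0 < t) {q : E²}
    (h₁ : dist q !₂[-t, 0] = 1) (h₃ : dist q !₂[t, 0] = 1) :
    ∃ y, q = !₂[0, y] ∧ y ^ 2 + t ^ 2 = 1 := by
  have h₁' := congrArg (· ^ 2) h₁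
  have h₃' := congrArg (· ^ 2) h₃
  simp only [EuclideanSpace.dist_sq_fin_two, Matrix.cons_val_zero, Matrix.cons_val_one,
    Matrix.cons_val_fin_one, sub_zero, one_pow] at h₁' h₃'
  have hq0 : q 0 = 0 := by
    have : q 0 * t = 0 := by linear_combination (h₁' - h₃') / 4
    simpa [ht.ne'] using this
  refine ⟨q 1, (EuclideanSpace.eq_toLp_fin_two_iff _ _ _).2 ⟨hq0, rfl⟩, ?_⟩
  rw [hq0] at h₃'
  linear_combination h₃'

lemma exists_eq_mul_cos_mul_sin {ε u v : ℝ} (hε : 0 ≤ ε) (h : u ^ 2 + v ^ 2 = ε ^ 2) :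
    ∃ θ, u = ε * cos θ ∧ v = ε * sin θ := by
  have hz : ‖(u + v * Complex.I : ℂ)‖ = ε := by rw [Complex.norm_add_mul_I, h, Real.sqrt_sq hε]
  refine ⟨Complex.arg (u + v * Complex.I), ?_, ?_⟩
  · simpa [hz] using (Complex.norm_mul_cos_arg (u + v * Complex.I)).symm
  · simpa [hz] using (Complex.norm_mul_sin_arg (u + v * Complex.I)).symm

section Topology
variable {X : Type*} [TopologicalSpace X]

lemma ConnectedComponents.coe_eq_coe_iff_connectedComponentIn {S : Set X} {x y : S} :
    (x : ConnectedComponents S) = y ↔ connectedComponentIn S x = connectedComponentIn S y := by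
  rw [ConnectedComponents.coe_eq_coe, connectedComponentIn_eq_image x.2,
    connectedComponentIn_eq_image y.2]
  exact Subtype.val_injective.image_injective.eq_iff.symm

lemma natCard_connectedComponents_union_eq_two {A B : Set X} (hA : IsPreconnected A)
    (hB : IsPreconnected B) {a b : X} (ha : a ∈ A) (hb : b ∈ B)
    (hab : connectedComponentIn (A ∪ B) a ≠ connectedComponentIn (A ∪ B) b) :
    Nat.card (ConnectedComponents ↥(A ∪ B)) = 2 := by
  have hcomp {C : Set X} (hC : IsPreconnected C) (hCAB : C ⊆ A ∪ B) {c z : X} (hc : c ∈ C)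
      (hz : z ∈ C) : connectedComponentIn (A ∪ B) z = connectedComponentIn (A ∪ B) c :=
    connectedComponentIn_eq (hC.subset_connectedComponentIn hz hCAB hc)
  rw [Nat.card_eq_two_iff]
  refine ⟨(⟨a, .inl ha⟩ : ↥(A ∪ B)), (⟨b, .inr hb⟩ : ↥(A ∪ B)),
    fun h => hab (ConnectedComponents.coe_eq_coe_iff_connectedComponentIn.1 h), ?_⟩
  refine Set.eq_univ_of_forall fun z => ?_
  obtain ⟨⟨z, hz⟩, rfl⟩ := ConnectedComponents.surjective_coe z
  simp only [Set.mem_insert_iff, Set.mem_singleton_iff,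
    ConnectedComponents.coe_eq_coe_iff_connectedComponentIn]
  rcases hz with hz | hz
  · exact .inl (hcomp hA Set.subset_union_left ha hz)
  · exact .inr (hcomp hB Set.subset_union_right hb hz)

end Topology

lemma connectedComponentIn_ne_of_not_mem {S : Set ℝ} {a b c : ℝ} (ha : a ∈ S) (hb : b ∈ S)
    (hc : c ∉ S) (hac : a < c) (hcb : c < b) :
    connectedComponentIn S a ≠ connectedComponentIn S b := by
  intro h
  have hb' : b ∈ connectedComponentIn S a := h ▸ mem_connectedComponentIn hb
  exact hc (connectedComponentIn_subset S a (isPreconnected_connectedComponentIn.Icc_subset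
    (mem_connectedComponentIn ha) hb' ⟨hac.le, hcb.le⟩))

namespace K33Example

-- Solves `(2 s + ε cos θ)² + (ε sin θ)² = 2`, i.e. `dist (p 2) (p 5) = √2`.
noncomputable def halfHeight (ε θ : ℝ) : ℝ := (√(2 - (ε * sin θ) ^ 2) - ε * cos θ) / 2

noncomputable def halfWidth (ε θ : ℝ) : ℝ := √(1 - halfHeight ε θ ^ 2)

noncomputable def stdConfig (ε θ : ℝ) : Fin 6 → E² :=
  ![!₂[0, halfHeight ε θ], !₂[-halfWidth ε θ, 0], !₂[0, -halfHeight ε θ], !₂[halfWidth ε θ, 0],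
    !₂[0, -halfHeight ε θ], !₂[ε * sin θ, halfHeight ε θ + ε * cos θ]]

noncomputable def gammaCurve (ε θ : ℝ) : ℝ :=
  dist (stdConfig ε θ 1) (lineReflection (stdConfig ε θ 3) (stdConfig ε θ 5) (stdConfig ε θ 2))

section Bounds

variable {ε : ℝ} (θ : ℝ)

lemma two_mul_halfHeight_add : 2 * halfHeight ε θ + ε * cos θ = √(2 - (ε * sin θ) ^ 2) := by
  rw [halfHeight]; ring

lemma abs_mul_cos_le (hε₀ : 0 ≤ ε) (hε : ε ≤ 1 / 10) : |ε * cos θ| ≤ 1 / 10 := by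
  rw [abs_mul, abs_of_nonneg hε₀]; nlinarith [abs_cos_le_one θ, abs_nonneg (cos θ)]

lemma abs_mul_sin_le (hε₀ : 0 ≤ ε) (hε : ε ≤ 1 / 10) : |ε * sin θ| ≤ 1 / 10 := by
  rw [abs_mul, abs_of_nonneg hε₀]; nlinarith [abs_sin_le_one θ, abs_nonneg (sin θ)]

lemma halfHeight_mem_Icc (hε₀ : 0 ≤ ε) (hε : ε ≤ 1 / 10) :
    halfHeight ε θ ∈ Set.Icc (13 / 20) (19 / 25) := by
  have hu := abs_le.1 (abs_mul_cos_le θ hε₀ hε)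
  have hv := abs_le.1 (abs_mul_sin_le θ hε₀ hε)
  have h1 : 141 / 100 ≤ √(2 - (ε * sin θ) ^ 2) := Real.le_sqrt_of_sq_le (by nlinarith)
  have h2 : √(2 - (ε * sin θ) ^ 2) ≤ 1415 / 1000 :=
    Real.sqrt_le_iff.2 ⟨by norm_num, by nlinarith⟩
  constructor <;> rw [halfHeight] <;> linarith

lemma halfWidth_sq_add_halfHeight_sq (hε₀ : 0 ≤ ε) (hε : ε ≤ 1 / 10) :
    halfWidth ε θ ^ 2 + halfHeight ε θ ^ 2 = 1 := by
  have := halfHeight_mem_Icc θ hε₀ hε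
  rw [halfWidth, Real.sq_sqrt (by nlinarith [this.1, this.2])]; ring

lemma halfWidth_mem_Icc (hε₀ : 0 ≤ ε) (hε : ε ≤ 1 / 10) :
    halfWidth ε θ ∈ Set.Icc (16 / 25) (19 / 25) := by
  have hs := halfHeight_mem_Icc θ hε₀ hε
  have ht := halfWidth_sq_add_halfHeight_sq θ hε₀ hε
  have ht0 : 0 ≤ halfWidth ε θ := Real.sqrt_nonneg _
  constructor <;> nlinarith [hs.1, hs.2]

end Bounds

lemma dist_stdConfig {ε : ℝ} (hε₀ : 0 ≤ ε) (hε : ε ≤ 1 / 10) (θ : ℝ) :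
    dist (stdConfig ε θ 0) (stdConfig ε θ 5) = ε ∧ dist (stdConfig ε θ 0) (stdConfig ε θ 1) = 1 ∧
      dist (stdConfig ε θ 1) (stdConfig ε θ 2) = 1 ∧ dist (stdConfig ε θ 2) (stdConfig ε θ 3) = 1 ∧
      dist (stdConfig ε θ 0) (stdConfig ε θ 3) = 1 ∧
      dist (stdConfig ε θ 2) (stdConfig ε θ 5) = √2 := by
  have hts := halfWidth_sq_add_halfHeight_sq θ hε₀ hε
  have h25 : (2 * halfHeight ε θ + ε * cos θ) ^ 2 = 2 - (ε * sin θ) ^ 2 := by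
    rw [two_mul_halfHeight_add, Real.sq_sqrt]; nlinarith [abs_le.1 (abs_mul_sin_le θ hε₀ hε)]
  refine ⟨?_, ?_, ?_, ?_, ?_, ?_⟩ <;>
    rw [← sq_eq_sq₀ dist_nonneg (by positivity), EuclideanSpace.dist_sq_fin_two] <;>
    simp only [stdConfig, Matrix.cons_val_zero, Matrix.cons_val_one, Matrix.cons_val,
      Matrix.cons_val_fin_one, one_pow, Nat.ofNat_nonneg, Real.sq_sqrt] <;>
    first | linear_combination hts | linear_combination h25 |
      linear_combination ε ^ 2 * sin_sq_add_cos_sq θ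

lemma stdConfig_three_ne_five {ε : ℝ} (hε₀ : 0 ≤ ε) (hε : ε ≤ 1 / 10) (θ : ℝ) :
    stdConfig ε θ 3 ≠ stdConfig ε θ 5 := by
  intro h35
  obtain ⟨-, -, -, h23, -, h25⟩ := dist_stdConfig hε₀ hε θ
  rw [h35, h25] at h23
  norm_num at h23

lemma dist_stdConfig_update_mem {ε : ℝ} (hε₀ : 0 ≤ ε) (hε : ε ≤ 1 / 10) (θ : ℝ) {q : E²}
    (hq3 : dist (stdConfig ε θ 3) q = 1) (hq5 : dist q (stdConfig ε θ 5) = √2) :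
    dist (stdConfig ε θ 1) q ∈ K33GammaSet ε 1 1 1 1 (√2) 1 (√2) := by
  obtain ⟨h05, h01, h12, h23, h03, h25⟩ := dist_stdConfig hε₀ hε θ
  refine ⟨dist_nonneg, Function.update (stdConfig ε θ) 4 q, ?_⟩
  simp only [Function.update_self, ne_eq, Fin.reduceEq, not_false_eq_true, Function.update_of_ne,
    and_true]
  exact ⟨h05, h01, h12, h23, hq3, hq5, h03, h25⟩

lemma exists_eq_stdConfig {ε t : ℝ} (hε₀ : 0 ≤ ε) (hε : ε ≤ 1 / 10) (ht : 0 < t)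
    {p : Fin 6 → E²} (hp1 : p 1 = !₂[-t, 0]) (hp3 : p 3 = !₂[t, 0]) (hp0 : 0 ≤ p 0 1)
    (h05 : dist (p 0) (p 5) = ε) (h01 : dist (p 0) (p 1) = 1) (h12 : dist (p 1) (p 2) = 1)
    (h23 : dist (p 2) (p 3) = 1) (h03 : dist (p 0) (p 3) = 1) (h25 : dist (p 2) (p 5) = √2) :
    ∃ θ, ∀ i, i ≠ 4 → p i = stdConfig ε θ i := by
  obtain ⟨s, hp0', hs⟩ := exists_eq_toLp_zero_of_dist_eq_one ht (hp1 ▸ h01) (hp3 ▸ h03)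
  obtain ⟨y, hp2, hy⟩ := exists_eq_toLp_zero_of_dist_eq_one ht (hp1 ▸ dist_comm (p 1) _ ▸ h12)
    (hp3 ▸ h23)
  have hy : y = -s := by
    rcases sq_eq_sq_iff_eq_or_eq_neg.1 (show y ^ 2 = s ^ 2 by linarith) with rfl | h
    · rw [hp2, ← hp0', h05] at h25
      linarith [Real.one_lt_sqrt_two]
    · exact h
  have huv : (p 5 1 - s) ^ 2 + (p 5 0) ^ 2 = ε ^ 2 := by
    rw [← h05, EuclideanSpace.dist_sq_fin_two, hp0']
    simp only [Matrix.cons_val_zero, Matrix.cons_val_one, Matrix.cons_val_fin_one]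
    ring
  obtain ⟨θ, hu, hv⟩ := exists_eq_mul_cos_mul_sin hε₀ huv
  have h2s : 2 * s + ε * cos θ = √(2 - (ε * sin θ) ^ 2) := by
    have h25' := congrArg (· ^ 2) h25
    simp only [EuclideanSpace.dist_sq_fin_two, hp2, hy, Matrix.cons_val_zero, Matrix.cons_val_one,
      Matrix.cons_val_fin_one, Nat.ofNat_nonneg, Real.sq_sqrt] at h25'
    have hv' := abs_le.1 (abs_mul_sin_le θ hε₀ hε)
    have hu' := abs_le.1 (abs_mul_cos_le θ hε₀ hε)
    have hs0 : 0 ≤ s := by simpa [hp0'] using hp0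
    have hsq : (2 * s + ε * cos θ) ^ 2 = 2 - (ε * sin θ) ^ 2 := by
      rw [← hu, ← hv]; linear_combination h25'
    rw [← hsq, Real.sqrt_sq (by nlinarith)]
  have hsθ : s = halfHeight ε θ := by rw [halfHeight, ← h2s]; ring
  have htθ : t = halfWidth ε θ := by
    rw [halfWidth, ← hsθ, show 1 - s ^ 2 = t ^ 2 by linarith, Real.sqrt_sq ht.le]
  refine ⟨θ, fun i hi => ?_⟩
  fin_cases i
  · simp [stdConfig, hp0', hsθ]
  · simp [stdConfig, hp1, htθ]
  · simp [stdConfig, hp2, hy, hsθ]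
  · simp [stdConfig, hp3, htθ]
  · exact absurd rfl hi
  · simp [stdConfig, EuclideanSpace.eq_toLp_fin_two_iff, hv, ← hsθ, ← hu]

theorem K33GammaSet_eq {ε : ℝ} (hε₀ : 0 < ε) (hε : ε ≤ 1 / 10) :
    K33GammaSet ε 1 1 1 1 (√2) 1 (√2) = insert 1 (Set.range (gammaCurve ε)) := by
  ext γ
  constructor
  · rintro ⟨-, p, h05, h01, h12, h23, h34, h45, h03, h25, h14⟩
    rcases eq_or_ne (p 1) (p 3) with h13 | h13
    · left; rw [← h14, h13, h34]
    obtain ⟨F, hF, hF1, hF3, hF0⟩ := exists_dist_preserving_normalize (p 1) (p 3) (p 0) h13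
    obtain ⟨θ, hθ⟩ := exists_eq_stdConfig (p := F ∘ p) hε₀.le hε (half_pos (dist_pos.2 h13))
      hF1 hF3 hF0 ((hF _ _).trans h05) ((hF _ _).trans h01) ((hF _ _).trans h12)
      ((hF _ _).trans h23) ((hF _ _).trans h03) ((hF _ _).trans h25)
    set P := stdConfig ε θ
    have hγ : γ = dist (P 1) (F (p 4)) := by
      rw [← hθ 1 (by decide), Function.comp_apply, hF, h14]
    have h43 : dist (F (p 4)) (P 3) = dist (P 2) (P 3) := by
      rw [← hθ 3 (by decide), ← hθ 2 (by decide), Function.comp_apply, Function.comp_apply, hF, hF,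
        dist_comm, h34, h23]
    have h45' : dist (F (p 4)) (P 5) = dist (P 2) (P 5) := by
      rw [← hθ 5 (by decide), ← hθ 2 (by decide), Function.comp_apply, Function.comp_apply, hF, hF,
        h45, h25]
    rcases eq_or_eq_lineReflection_of_dist_eq (stdConfig_three_ne_five hε₀.le hε θ) h43 h45'
      with h4 | h4
    · left; rw [hγ, h4, (dist_stdConfig hε₀.le hε θ).2.2.1]
    · right; exact ⟨θ, by rw [hγ, h4, gammaCurve]⟩
  · obtain ⟨-, -, h12, h23, -, h25⟩ := dist_stdConfig hε₀.le hε 0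
    rintro (rfl | ⟨θ, rfl⟩)
    · simpa [h12] using dist_stdConfig_update_mem hε₀.le hε 0 ((dist_comm _ _).trans h23) h25
    · obtain ⟨-, -, -, h23, -, h25⟩ := dist_stdConfig hε₀.le hε θ
      refine dist_stdConfig_update_mem hε₀.le hε θ ?_ ?_
      · rw [dist_comm, dist_lineReflection_left, h23]
      · rw [dist_lineReflection_right, h25]

noncomputable def gammaSq (s t u v : ℝ) : ℝ :=
  1 + 8 * t * (s + u) * (2 * s * t + t * u - s * v) / ((v - t) ^ 2 + (s + u) ^ 2)

lemma gammaCurve_sq {ε : ℝ} (hε₀ : 0 ≤ ε) (hε : ε ≤ 1 / 10) (θ : ℝ) :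
    gammaCurve ε θ ^ 2 = gammaSq (halfHeight ε θ) (halfWidth ε θ) (ε * cos θ) (ε * sin θ) := by
  rw [gammaCurve]
  set P := stdConfig ε θ
  set R := lineReflection (P 3) (P 5) (P 2)
  have hs := halfHeight_mem_Icc θ hε₀ hε
  have hu := abs_le.1 (abs_mul_cos_le θ hε₀ hε)
  have hW : (ε * sin θ - halfWidth ε θ) ^ 2 + (halfHeight ε θ + ε * cos θ) ^ 2 ≠ 0 := by
    have : 0 < halfHeight ε θ + ε * cos θ := by linarith [hs.1]
    positivity
  -- `R` stays at distance 1 from `P 3`, so `γ² = 1 + 4 t (R 0)`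
  have hR3 : dist R (P 3) ^ 2 = 1 := by
    rw [dist_lineReflection_left, (dist_stdConfig hε₀ hε θ).2.2.2.1, one_pow]
  have hR0 : R 0 = 2 * (halfHeight ε θ + ε * cos θ) * (2 * halfHeight ε θ * halfWidth ε θ +
        halfWidth ε θ * (ε * cos θ) - halfHeight ε θ * (ε * sin θ)) /
      ((ε * sin θ - halfWidth ε θ) ^ 2 + (halfHeight ε θ + ε * cos θ) ^ 2) := by
    rw [eq_div_iff hW]
    simp only [R, P, lineReflection_apply, stdConfig, Matrix.cons_val_zero, Matrix.cons_val_one,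
      Matrix.cons_val, Matrix.cons_val_fin_one, sub_zero, zero_sub]
    field_simp
    ring
  rw [EuclideanSpace.dist_sq_fin_two] at hR3
  rw [EuclideanSpace.dist_sq_fin_two, gammaSq]
  simp only [P, stdConfig, Matrix.cons_val_zero, Matrix.cons_val_one, Matrix.cons_val,
    Matrix.cons_val_fin_one] at hR3 ⊢
  linear_combination hR3 + 4 * halfWidth ε θ * hR0

lemma two_le_gammaSq {s t u v : ℝ} (hs : s ∈ Set.Icc (13 / 20) (19 / 25))
    (ht : t ∈ Set.Icc (16 / 25) (19 / 25)) (hu : |u| ≤ 1 / 10) (hv : |v| ≤ 1 / 10) :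
    2 ≤ gammaSq s t u v := by
  obtain ⟨hs₁, hs₂⟩ := hs
  obtain ⟨ht₁, ht₂⟩ := ht
  obtain ⟨hu₁, hu₂⟩ := abs_le.1 hu
  obtain ⟨hv₁, hv₂⟩ := abs_le.1 hv
  have hN : 17 / 25 ≤ 2 * s * t + t * u - s * v := by nlinarith
  have hW : (v - t) ^ 2 + (s + u) ^ 2 ≤ 37 / 25 := by nlinarith
  have hX : 37 / 25 ≤ 8 * t * (s + u) * (2 * s * t + t * u - s * v) := by
    have : 44 / 125 ≤ t * (s + u) := by nlinarith
    nlinarith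
  rw [gammaSq, ← sub_le_iff_le_add', show (2 : ℝ) - 1 = 1 by norm_num,
    one_le_div (by nlinarith)]
  linarith

lemma sqrt_two_le_gammaCurve {ε : ℝ} (hε₀ : 0 ≤ ε) (hε : ε ≤ 1 / 10) (θ : ℝ) :
    √2 ≤ gammaCurve ε θ :=
  Real.sqrt_le_iff.2 ⟨dist_nonneg, gammaCurve_sq hε₀ hε θ ▸ two_le_gammaSq
    (halfHeight_mem_Icc θ hε₀ hε) (halfWidth_mem_Icc θ hε₀ hε) (abs_mul_cos_le θ hε₀ hε)
    (abs_mul_sin_le θ hε₀ hε)⟩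

lemma gammaSq_sub_five_mul {s t u : ℝ} (ht : t ^ 2 + s ^ 2 = 1) (hs : 2 * s + u = √2)
    (hW : 1 + √2 * u ≠ 0) :
    (gammaSq s t u 0 - 5) * (1 + √2 * u) = u * (2 * √2 + 2 * u - √2 * u ^ 2) := by
  have hr : √2 ^ 2 = 2 := Real.sq_sqrt (by norm_num)
  have hW' : (0 - t) ^ 2 + (s + u) ^ 2 = 1 + √2 * u := by linear_combination ht + u * hs
  obtain rfl : s = (√2 - u) / 2 := by linear_combination hs / 2
  rw [gammaSq, hW', sub_mul, add_mul, div_mul_cancel₀ _ hW]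
  linear_combination 8 * ((√2 - u) / 2 + u) * (2 * ((√2 - u) / 2) + u) * ht +
    (2 + u * √2 + u ^ 2 - √2 ^ 2) * hr

lemma gammaCurve_sq_sub_five_mul {ε θ : ℝ} (hε₀ : 0 ≤ ε) (hε : ε ≤ 1 / 10) (hθ : sin θ = 0) :
    (gammaCurve ε θ ^ 2 - 5) * (1 + √2 * (ε * cos θ)) =
      ε * cos θ * (2 * √2 + 2 * (ε * cos θ) - √2 * (ε * cos θ) ^ 2) := by
  have hu := abs_le.1 (abs_mul_cos_le θ hε₀ hε)
  have h2 : √2 ≤ 3 / 2 := Real.sqrt_le_iff.2 ⟨by norm_num, by norm_num⟩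
  rw [gammaCurve_sq hε₀ hε, hθ, mul_zero]
  have hW : -(3 / 20) ≤ √2 * (ε * cos θ) := by
    nlinarith [mul_nonneg (Real.sqrt_nonneg 2) (by linarith : 0 ≤ ε * cos θ + 1 / 10)]
  refine gammaSq_sub_five_mul (halfWidth_sq_add_halfHeight_sq θ hε₀ hε) ?_ (by linarith)
  rw [two_mul_halfHeight_add, hθ]; norm_num

lemma continuous_stdConfig (ε : ℝ) : Continuous (stdConfig ε) := by
  unfold stdConfig halfWidth halfHeight; fun_prop

lemma continuous_gammaCurve {ε : ℝ} (hε₀ : 0 ≤ ε) (hε : ε ≤ 1 / 10) :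
    Continuous (gammaCurve ε) := by
  have hP (i : Fin 6) : Continuous fun θ => stdConfig ε θ i :=
    (continuous_apply i).comp (continuous_stdConfig ε)
  exact (hP 1).dist ((hP 3).lineReflection (hP 5) (hP 2) (stdConfig_three_ne_five hε₀ hε))

lemma sqrt_five_mem_range_gammaCurve {ε : ℝ} (hε₀ : 0 < ε) (hε : ε ≤ 1 / 10) :
    √5 ∈ Set.range (gammaCurve ε) := by
  have h2 : 141 / 100 ≤ √2 := Real.le_sqrt_of_sq_le (by norm_num)
  have h2' : √2 ≤ 3 / 2 := Real.sqrt_le_iff.2 ⟨by norm_num, by norm_num⟩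
  have h0 := gammaCurve_sq_sub_five_mul hε₀.le hε (θ := 0) sin_zero
  have hπ := gammaCurve_sq_sub_five_mul hε₀.le hε (θ := π) sin_pi
  rw [cos_zero, mul_one] at h0
  rw [cos_pi, mul_neg_one] at hπ
  have hW₀ : 0 < 1 + √2 * ε := by positivity
  have hWπ : 0 < 1 + √2 * -ε := by nlinarith
  have hR₀ : 0 < ε * (2 * √2 + 2 * ε - √2 * ε ^ 2) := by nlinarith
  have hRπ : -ε * (2 * √2 + 2 * -ε - √2 * (-ε) ^ 2) < 0 := by nlinarith
  have hle : gammaCurve ε π ≤ √5 := Real.le_sqrt_of_sq_le (by nlinarith)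
  have hge : √5 ≤ gammaCurve ε 0 := Real.sqrt_le_iff.2 ⟨dist_nonneg, by nlinarith⟩
  obtain ⟨θ, -, hθ⟩ :=
    intermediate_value_Icc' pi_pos.le (continuous_gammaCurve hε₀.le hε).continuousOn ⟨hle, hge⟩
  exact ⟨θ, hθ⟩

end K33Example

open K33Example in
/-- **Example: two disjoint intervals of admissible `γ`.** For all sufficiently
small `ε > 0`, with lengths `a = ε`, `b = c = d = e = α = 1`, `f = β = √2`, the
set of values `γ ≥ 0` for which `(K_{3,3}, l)` is realizable has exactly two
connected components, one containing `1` and one containing `√5`. -/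
theorem K33_gamma_set_two_components :
    ∃ ε₀ > (0 : ℝ), ∀ ε : ℝ, 0 < ε → ε < ε₀ →
      Nat.card (ConnectedComponents
        (K33GammaSet ε 1 1 1 1 (Real.sqrt 2) 1 (Real.sqrt 2))) = 2 ∧
      (1 : ℝ) ∈ K33GammaSet ε 1 1 1 1 (Real.sqrt 2) 1 (Real.sqrt 2) ∧
      Real.sqrt 5 ∈ K33GammaSet ε 1 1 1 1 (Real.sqrt 2) 1 (Real.sqrt 2) ∧
      connectedComponentIn
          (K33GammaSet ε 1 1 1 1 (Real.sqrt 2) 1 (Real.sqrt 2)) 1 ≠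
        connectedComponentIn
          (K33GammaSet ε 1 1 1 1 (Real.sqrt 2) 1 (Real.sqrt 2))
          (Real.sqrt 5) := by
  refine ⟨1 / 10, by norm_num, fun ε hε₀ hε => ?_⟩
  have hS := K33GammaSet_eq hε₀ hε.le
  have h5 := sqrt_five_mem_range_gammaCurve hε₀ hε.le
  have h1S : (1 : ℝ) ∈ K33GammaSet ε 1 1 1 1 (√2) 1 (√2) := hS ▸ Set.mem_insert _ _
  have h5S : √5 ∈ K33GammaSet ε 1 1 1 1 (√2) 1 (√2) := hS ▸ Set.mem_insert_of_mem _ h5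
  have hgap : (6 / 5 : ℝ) ∉ K33GammaSet ε 1 1 1 1 (√2) 1 (√2) := by
    rw [hS]
    rintro (h | ⟨θ, hθ⟩)
    · norm_num at h
    · have := (Real.lt_sqrt (by norm_num)).2 (by norm_num : (6 / 5 : ℝ) ^ 2 < 2)
      linarith [sqrt_two_le_gammaCurve hε₀.le hε.le θ]
  have hne := connectedComponentIn_ne_of_not_mem h1S h5S hgap (by norm_num)
    ((Real.lt_sqrt (by norm_num)).2 (by norm_num))
  refine ⟨?_, h1S, h5S, hne⟩
  rw [hS, Set.insert_eq] at hne ⊢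
  exact natCard_connectedComponents_union_eq_two isPreconnected_singleton
    (isPreconnected_range (continuous_gammaCurve hε₀.le hε.le)) rfl h5 hne
end
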